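/- arXiv:2304.07190 — 7 statements merged into one kernel-verified Lean document; each statement's English description precedes it below -/
import Mathlib

section
/- The square root of a regular language is regular: if L is a regular language over a finite alphabet Σ, then √L := {w | ww ∈ L} is also regular. -/
/-- The square root of a language: words `w` such that `w ++ w ∈ L`. -/
def Language.sqrtLang {σ : Type*} (L : Language σ) : Language σ :=
  {w | w ++ w ∈ L}

private lemma sqrt_evalFrom {T S : Type*} (M : DFA T S) (f : S → S) (w : List T) :
    DFA.evalFrom (⟨fun g a s => M.step (g s) a, id, {g | g (g M.start) ∈ M.accept}⟩ : DFA T (S → S))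
      f w = fun s => M.evalFrom (f s) w := by
  induction w generalizing f with
  | nil => rfl
  | cons a w ih => simpa [DFA.evalFrom] using ih _

/-- The square root of a regular language over a finite alphabet is regular. -/
theorem sqrt_isRegular {σ : Type*} [Fintype σ] (L : Language σ)
    (hL : L.IsRegular) : L.sqrtLang.IsRegular := by
  classical
  obtain ⟨S, _, M, rfl⟩ := hL
  refine ⟨S → S, by infer_instance,
    ⟨fun g a s => M.step (g s) a, id, {g | g (g M.start) ∈ M.accept}⟩, ?_⟩
  ext w
  simp only [DFA.mem_accepts, DFA.eval, Language.sqrtLang, Set.mem_setOf_eq,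
    sqrt_evalFrom, M.evalFrom_of_append]
  rfl
end

section
/- If L is a regular language over Σ ∪ {⊤} (where ⊤ is a distinguished letter), then the language E(L) := {w | ∃ n ∈ ℕ, (w⊤)ⁿw ∈ L} is regular. -/
/-!
Let `M` be a finite automaton for `L` and `f = M.evalFrom · w` the state transformation induced
by `w`. Reading `(w⊤)ⁿw` from `s` ends in `f ((τ ∘ f)^[n] s)`, where `τ` is the transition on `⊤`,
so whether `w ∈ E(L)` depends only on `f`. Hence `E(L)` is recognised by the transition monoid of
`M`, i.e. by the finite automaton with states `σ → σ`.
-/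

/-- `tpow top w n = (w⊤)ⁿw`: `n+1` copies of `w` separated by the letter `⊤`. -/
def tpow {α : Type*} (top : α) (w : List α) : ℕ → List α
  | 0 => w
  | n + 1 => w ++ top :: tpow top w n

/-- `E(L) = {w | ∃ n, (w⊤)ⁿw ∈ L}`. -/
def Elang {α : Type*} (top : α) (L : Language α) : Language α :=
  {w | ∃ n : ℕ, tpow top w n ∈ L}

namespace DFA

variable {α σ : Type*}

def transitionDFA (M : DFA α σ) (P : Set (σ → σ)) : DFA α (σ → σ) where
  step f a s := M.step (f s) a
  start := id
  accept := P

theorem evalFrom_transitionDFA (M : DFA α σ) (P : Set (σ → σ)) (w : List α) (f : σ → σ) :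
    (M.transitionDFA P).evalFrom f w = fun s => M.evalFrom (f s) w := by
  induction w generalizing f with
  | nil => rfl
  | cons a w ih => exact ih _

theorem accepts_transitionDFA (M : DFA α σ) (P : Set (σ → σ)) :
    (M.transitionDFA P).accepts = {w | (M.evalFrom · w) ∈ P} := by
  ext w
  simp only [mem_accepts, eval, evalFrom_transitionDFA]
  rfl

theorem isRegular_setOf_evalFrom_mem [Finite σ] (M : DFA α σ) (P : Set (σ → σ)) :
    Language.IsRegular {w | (M.evalFrom · w) ∈ P} := by
  classical
  have := Fintype.ofFinite σ
  exact Language.isRegular_iff.mpr ⟨σ → σ, inferInstance, M.transitionDFA P,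
    M.accepts_transitionDFA P⟩

theorem evalFrom_tpow (M : DFA α σ) (top : α) (w : List α) (n : ℕ) (s : σ) :
    M.evalFrom s (tpow top w n) =
      M.evalFrom ((fun t => M.step (M.evalFrom t w) top)^[n] s) w := by
  induction n generalizing s with
  | zero => rfl
  | succ n ih =>
    rw [tpow, evalFrom_of_append, evalFrom_cons, ih, Function.iterate_succ_apply]

end DFA

theorem Elang_isRegular_general {α : Type*} (top : α) (L : Language α)
    (hL : L.IsRegular) : (Elang top L).IsRegular := by
  obtain ⟨σ, _, M, rfl⟩ := hL
  have hE : Elang top M.accepts =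
      {w | (M.evalFrom · w) ∈ {f | ∃ n, f ((fun t => M.step (f t) top)^[n] M.start) ∈ M.accept}} := by
    ext w
    simp only [Elang, DFA.mem_accepts, DFA.eval, DFA.evalFrom_tpow]
    rfl
  rw [hE]
  exact M.isRegular_setOf_evalFrom_mem _

/-- If `L` is a regular language over `Σ ∪ {⊤}` then `E(L)` is regular. -/
theorem Elang_isRegular {α : Type*} [Fintype α] (top : α) (L : Language α)
    (hL : L.IsRegular) : (Elang top L).IsRegular :=
  Elang_isRegular_general top L hL
end

section
/- The closure C_T also commutes with union and Kleene star: C_T(L ∪ K) = C_T(L) ∪ C_T(K) and C_T(L*) = (C_T(L))*, for all languages L, K over Σ ∪ {⊤}. -/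
/-- One rewriting step: `u →_T v` iff `u = l ++ w ++ r` and `v = l ++ ⊤ :: r`. -/
def stepT {α : Type*} (top : α) (u v : List α) : Prop :=
  ∃ l w r : List α, u = l ++ w ++ r ∧ v = l ++ top :: r

/-- `C_T(L) = {u | u →_T* v for some v ∈ L}`. -/
def CT {α : Type*} (top : α) (L : Language α) : Language α :=
  {u | ∃ v ∈ L, Relation.ReflTransGen (stepT top) u v}

/-! A step into `v₁ ++ v₂` writes a single `⊤`, which lies entirely in `v₁` or in `v₂`, so a
rewriting sequence into a concatenation splits into rewriting sequences of the two factors;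
conversely rewriting sequences of factors can be concatenated. Hence `C_T` is a semiring
endomorphism of languages, and it preserves arbitrary unions since it is defined pointwise.
Both claims follow, the second because `L∗ = ⨆ n, L ^ n`. -/

open Relation Computability

section

variable {α : Type*} {top : α}

theorem mem_CT {L : Language α} {u : List α} :
    u ∈ CT top L ↔ ∃ v ∈ L, ReflTransGen (stepT top) u v :=
  Iff.rfl

theorem stepT_append_left {u v : List α} (x : List α) (h : stepT top u v) :
    stepT top (x ++ u) (x ++ v) := by
  obtain ⟨l, w, r, rfl, rfl⟩ := h
  exact ⟨x ++ l, w, r, by simp, by simp⟩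

theorem stepT_append_right {u v : List α} (x : List α) (h : stepT top u v) :
    stepT top (u ++ x) (v ++ x) := by
  obtain ⟨l, w, r, rfl, rfl⟩ := h
  exact ⟨l, w, r ++ x, by simp, by simp⟩

theorem reflTransGen_stepT_append {u₁ v₁ u₂ v₂ : List α}
    (h₁ : ReflTransGen (stepT top) u₁ v₁) (h₂ : ReflTransGen (stepT top) u₂ v₂) :
    ReflTransGen (stepT top) (u₁ ++ u₂) (v₁ ++ v₂) :=
  (h₁.lift (· ++ u₂) fun _ _ => stepT_append_right u₂).trans
    (h₂.lift (v₁ ++ ·) fun _ _ => stepT_append_left v₁)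

theorem stepT_append_cases {u v₁ v₂ : List α} (h : stepT top u (v₁ ++ v₂)) :
    (∃ u₁, u = u₁ ++ v₂ ∧ stepT top u₁ v₁) ∨ ∃ u₂, u = v₁ ++ u₂ ∧ stepT top u₂ v₂ := by
  obtain ⟨l, w, r, rfl, hv⟩ := h
  rcases List.append_eq_append_iff.mp hv with ⟨a, rfl, rfl⟩ | ⟨c, rfl, hr⟩
  · exact .inr ⟨a ++ w ++ r, by simp, a, w, r, rfl, rfl⟩
  · match c, hr with
    | [], hr => exact .inr ⟨w ++ r, by simp, [], w, r, rfl, by simpa using hr.symm⟩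
    | x :: c, hr =>
      obtain ⟨rfl, rfl⟩ : top = x ∧ r = c ++ v₂ := by simpa using hr
      exact .inl ⟨l ++ w ++ c, by simp, l, w, c, rfl, rfl⟩

theorem exists_split_of_reflTransGen_stepT_append {u v₁ v₂ : List α}
    (h : ReflTransGen (stepT top) u (v₁ ++ v₂)) :
    ∃ u₁ u₂, u = u₁ ++ u₂ ∧ ReflTransGen (stepT top) u₁ v₁ ∧
      ReflTransGen (stepT top) u₂ v₂ := by
  induction h using ReflTransGen.head_induction_on with
  | refl => exact ⟨v₁, v₂, rfl, .refl, .refl⟩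
  | head hstep _ ih =>
    obtain ⟨u₁, u₂, rfl, h₁, h₂⟩ := ih
    rcases stepT_append_cases hstep with ⟨u₁', rfl, hs⟩ | ⟨u₂', rfl, hs⟩
    · exact ⟨u₁', u₂, rfl, .head hs h₁, h₂⟩
    · exact ⟨u₁, u₂', rfl, h₁, .head hs h₂⟩

theorem eq_nil_of_reflTransGen_stepT_nil {u : List α} (h : ReflTransGen (stepT top) u []) :
    u = [] := by
  rcases h.cases_tail with rfl | ⟨_, _, l, w, r, _, hv⟩
  · rfl
  · simp at hv

theorem CT_one : CT top (1 : Language α) = 1 := by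
  ext u
  simp only [mem_CT, Language.mem_one, exists_eq_left]
  exact ⟨eq_nil_of_reflTransGen_stepT_nil, fun h => h ▸ .refl⟩

theorem CT_add (L K : Language α) : CT top (L + K) = CT top L + CT top K := by
  ext u
  simp only [mem_CT, Language.mem_add, or_and_right, exists_or]

theorem CT_mul (L M : Language α) : CT top (L * M) = CT top L * CT top M := by
  ext u
  simp only [mem_CT, Language.mem_mul]
  constructor
  · rintro ⟨_, ⟨v₁, hv₁, v₂, hv₂, rfl⟩, h⟩
    obtain ⟨u₁, u₂, rfl, h₁, h₂⟩ := exists_split_of_reflTransGen_stepT_append h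
    exact ⟨u₁, ⟨v₁, hv₁, h₁⟩, u₂, ⟨v₂, hv₂, h₂⟩, rfl⟩
  · rintro ⟨u₁, ⟨v₁, hv₁, h₁⟩, u₂, ⟨v₂, hv₂, h₂⟩, rfl⟩
    exact ⟨v₁ ++ v₂, ⟨v₁, hv₁, v₂, hv₂, rfl⟩, reflTransGen_stepT_append h₁ h₂⟩

theorem CT_iSup {ι : Sort*} (L : ι → Language α) : CT top (⨆ i, L i) = ⨆ i, CT top (L i) := by
  ext u
  simp only [mem_CT, Language.mem_iSup]
  exact ⟨fun ⟨v, ⟨i, hv⟩, h⟩ => ⟨i, v, hv, h⟩, fun ⟨i, v, hv, h⟩ => ⟨v, ⟨i, hv⟩, h⟩⟩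

variable (top) in
def CTRingHom : Language α →+* Language α where
  toFun := CT top
  map_zero' := by
    ext u
    simp [mem_CT, Language.notMem_zero]
  map_one' := CT_one
  map_add' := CT_add
  map_mul' := CT_mul

theorem CT_pow (L : Language α) (n : ℕ) : CT top (L ^ n) = CT top L ^ n :=
  map_pow (CTRingHom top) L n

theorem CT_kstar (L : Language α) : CT top L∗ = (CT top L)∗ := by
  simp only [Language.kstar_eq_iSup_pow, CT_iSup, CT_pow]

end

/-- `C_T` commutes with union and Kleene star. -/
theorem CT_union_kstar {α : Type*} (top : α) (L K : Language α) :
    CT top (L + K) = CT top L + CT top K ∧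
    CT top (KStar.kstar L) = KStar.kstar (CT top L) :=
  ⟨CT_add L K, CT_kstar L⟩
end

section
/- Define →_F on words over Σ ∪ {⊤} by: u →_F v iff either u →_T v, or u is obtained by replacing a factor of the form w⊤w in v by w. Define C_F(L) := {u | u →_F* v for some v ∈ L}. Then C_F does not commute with concatenation: there exist languages L, K with C_F(L·K) ≠ C_F(L)·C_F(K). In particular, with Σ = {a}, taking L = {a} and K = {⊤a}, the word a lies in C_F(L·K) but not in C_F(L)·C_F(K). -/
/-- `u →_F v` iff `u →_T v`, or `u` is obtained from `v` by collapsing a factor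
`w ⊤ w` to `w`, i.e. `u = l ++ w ++ r` and `v = l ++ w ++ ⊤ :: w ++ r`. -/
def stepF {α : Type*} (top : α) (u v : List α) : Prop :=
  stepT top u v ∨ ∃ l w r : List α, u = l ++ w ++ r ∧ v = l ++ w ++ top :: w ++ r

/-- `C_F(L) = {u | u →_F* v for some v ∈ L}`. -/
def CF {α : Type*} (top : α) (L : Language α) : Language α :=
  {u | ∃ v ∈ L, Relation.ReflTransGen (stepF top) u v}

/-- `C_F` does not commute with concatenation: with `Σ = {a}`, taking `L = {a}`
and `K = {⊤a}`, the word `a` lies in `C_F(L·K)` but not in `C_F(L)·C_F(K)`;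
in particular there are languages `L, K` with `C_F(L·K) ≠ C_F(L)·C_F(K)`. -/
theorem CF_not_mul {α : Type*} (top a : α) (hne : a ≠ top) :
    ([a] ∈ CF top (({[a]} : Language α) * {[top, a]}) ∧
      [a] ∉ CF top ({[a]} : Language α) * CF top ({[top, a]} : Language α)) ∧
    ∃ L K : Language α, CF top (L * K) ≠ CF top L * CF top K := by
  have hmem : ∀ u v : List α, Relation.ReflTransGen (stepF top) u v →
      ∀ x ∈ v, x = top ∨ x ∈ u := by
    intro u v h
    induction h using Relation.ReflTransGen.head_induction_on with
    | refl => intro x hx; exact Or.inr hx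
    | head hstep _ ih =>
      rename_i b c hbc
      intro x hx
      rcases ih x hx with h1 | h1
      · exact Or.inl h1
      · rcases hstep with ⟨l, w, r, hu, hv⟩ | ⟨l, w, r, hu, hv⟩ <;> subst hu hv <;>
          simp_all <;> tauto
  have hnil : ∀ w : List α, ¬ ([] : List α) ∈ CF top ({w} : Language α) →
      True := fun _ _ => trivial
  have key : ∀ v : List α, a ∈ v → ¬ Relation.ReflTransGen (stepF top) [] v := by
    intro v hav h
    rcases hmem [] v h a hav with h1 | h1
    · exact hne h1
    · simp at h1
  have h1 : [a] ∈ CF top (({[a]} : Language α) * {[top, a]}) := by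
    refine ⟨[a, top, a], ?_, ?_⟩
    · exact ⟨[a], rfl, [top, a], rfl, rfl⟩
    · exact Relation.ReflTransGen.single (Or.inr ⟨[], [a], [], rfl, rfl⟩)
  have h2 : [a] ∉ CF top ({[a]} : Language α) * CF top ({[top, a]} : Language α) := by
    rintro ⟨x, hx, y, hy, hxy⟩
    have hcase : (x = [] ∧ y = [a]) ∨ (x = [a] ∧ y = []) := by
      rcases x with _ | ⟨b, _ | _⟩ <;> simp_all
    rcases hcase with ⟨hx0, hy0⟩ | ⟨hx0, hy0⟩
    · subst hx0
      rcases hx with ⟨v, hv, hr⟩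
      obtain rfl : v = [a] := hv
      exact key [a] (by simp) hr
    · subst hy0
      rcases hy with ⟨v, hv, hr⟩
      obtain rfl : v = [top, a] := hv
      exact key [top, a] (by simp) hr
  refine ⟨⟨h1, h2⟩, {[a]}, {[top, a]}, fun h => h2 (h ▸ h1)⟩
end

section
/- For all words u, v over Σ ∪ {⊤}: u →_F* v if and only if u ∈ E(C_T({v})), i.e., iff there exists n ∈ ℕ such that (u⊤)ⁿu →_T* v. Consequently, C_F = E ∘ C_T as operations on languages. -/
section Rewriting

open Relation

variable {α : Type*} (top : α)

theorem stepT_append_append {a b : List α} (l r : List α) (h : stepT top a b) :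
    stepT top (l ++ a ++ r) (l ++ b ++ r) := by
  obtain ⟨l', w, r', rfl, rfl⟩ := h
  exact ⟨l ++ l', w, r' ++ r, by simp, by simp⟩

theorem reflTransGen_stepT_append_append {a b : List α} (l r : List α)
    (h : ReflTransGen (stepT top) a b) :
    ReflTransGen (stepT top) (l ++ a ++ r) (l ++ b ++ r) :=
  h.lift (fun x => l ++ x ++ r) fun _ _ => stepT_append_append top l r

theorem reflTransGen_stepT_append_top_self {a x : List α}
    (h : ReflTransGen (stepT top) a x) :
    ReflTransGen (stepT top) (a ++ top :: a) (x ++ top :: x) := by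
  have left := reflTransGen_stepT_append_append top [] (top :: a) h
  have right := reflTransGen_stepT_append_append top (x ++ [top]) [] h
  simp only [List.nil_append, List.append_nil, List.append_assoc, List.cons_append] at left right
  exact left.trans right

theorem stepT_self_top_self (l w r : List α) :
    stepT top ((l ++ w ++ r) ++ top :: (l ++ w ++ r)) (l ++ w ++ top :: w ++ r) :=
  ⟨l ++ w, r ++ top :: l, w ++ r, by simp, by simp⟩

theorem tpow_add_add_one (u : List α) (n m : ℕ) :
    tpow top u (n + m + 1) = tpow top u n ++ top :: tpow top u m := by
  induction n with
  | zero => simp [tpow]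
  | succ n ih => simp [tpow, Nat.add_right_comm n 1 m, ih]

theorem stepF_tpow_succ (u : List α) (n : ℕ) :
    stepF top (tpow top u n) (tpow top u (n + 1)) := by
  cases n with
  | zero => exact Or.inr ⟨[], u, [], by simp [tpow], by simp [tpow]⟩
  | succ n => exact Or.inr ⟨[], u, top :: tpow top u n, by simp [tpow], by simp [tpow]⟩

theorem reflTransGen_stepF_tpow (u : List α) (n : ℕ) :
    ReflTransGen (stepF top) u (tpow top u n) := by
  induction n with
  | zero => exact .refl
  | succ n ih => exact ih.tail (stepF_tpow_succ top u n)

theorem exists_reflTransGen_stepT_tpow_of_stepF {u x v : List α} {n : ℕ}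
    (hx : ReflTransGen (stepT top) (tpow top u n) x) (h : stepF top x v) :
    ∃ m, ReflTransGen (stepT top) (tpow top u m) v := by
  rcases h with hT | ⟨l, w, r, rfl, rfl⟩
  · exact ⟨n, hx.tail hT⟩
  · refine ⟨n + n + 1, ?_⟩
    rw [tpow_add_add_one]
    exact (reflTransGen_stepT_append_top_self top hx).tail (stepT_self_top_self top l w r)

theorem reflTransGen_stepF_iff (u v : List α) :
    ReflTransGen (stepF top) u v ↔ ∃ n, ReflTransGen (stepT top) (tpow top u n) v := by
  constructor
  · intro h
    induction h with
    | refl => exact ⟨0, .refl⟩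
    | tail _ hstep ih =>
      obtain ⟨n, hn⟩ := ih
      exact exists_reflTransGen_stepT_tpow_of_stepF top hn hstep
  · rintro ⟨n, hn⟩
    exact (reflTransGen_stepF_tpow top u n).trans (ReflTransGen.mono (fun _ _ => Or.inl) _ _ hn)

end Rewriting

/-- `u →_F* v` iff `(u⊤)ⁿu →_T* v` for some `n`; consequently `C_F = E ∘ C_T`. -/
theorem CF_eq_E_comp_CT {α : Type*} (top : α) :
    (∀ u v : List α, Relation.ReflTransGen (stepF top) u v ↔
      ∃ n : ℕ, Relation.ReflTransGen (stepT top) (tpow top u n) v) ∧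
    (∀ L : Language α, CF top L = Elang top (CT top L)) := by
  refine ⟨reflTransGen_stepF_iff top, fun L => ?_⟩
  ext u
  simp only [CF, Elang, CT, reflTransGen_stepF_iff]
  exact ⟨fun ⟨v, hv, n, hn⟩ => ⟨n, v, hv, hn⟩, fun ⟨n, v, hv, hn⟩ => ⟨v, hv, n, hn⟩⟩
end

section
/- Associate to each word u = a₁...aₙ over Σ ∪ {⊤} the graph g(u) with vertices 0,...,n, an aᵢ-labelled edge from i−1 to i whenever aᵢ ∈ Σ (no edge when aᵢ = ⊤), input 0 and output n. If u →_F v (single step), then there is a graph homomorphism from g(v) to g(u) preserving labelled edges, input, and output. -/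
/-- `f` is a homomorphism from the graph `g(v)` to the graph `g(u)`:
it maps the input to the input, the output to the output, and every `Σ`-labelled
edge of `g(v)` (i.e. every position of `v` not carrying the letter `⊤`) to an
edge of `g(u)` with the same label. -/
def IsWordGraphHom {α : Type*} (top : α) (u v : List α)
    (f : Fin (v.length + 1) → Fin (u.length + 1)) : Prop :=
  f 0 = 0 ∧ f (Fin.last v.length) = Fin.last u.length ∧
    ∀ i : Fin v.length, v.get i ≠ top →
      ∃ j : Fin u.length, u.get j = v.get i ∧
        f i.castSucc = j.castSucc ∧ f i.succ = j.succ

/-- `g(u) ◁ g(v)`: there exists a graph homomorphism from `g(v)` to `g(u)`. -/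
def GraphLE {α : Type*} (top : α) (u v : List α) : Prop :=
  ∃ f : Fin (v.length + 1) → Fin (u.length + 1), IsWordGraphHom top u v f

/-- ℕ-indexed pointed homomorphism from `g(v)` (as a path from `p` to `q`) into `g(u)`. -/
def NHom {α : Type*} (top : α) (u v : List α) (f : ℕ → ℕ) (p q : ℕ) : Prop :=
  (∀ i ≤ v.length, f i ≤ u.length) ∧ f 0 = p ∧ f v.length = q ∧
  ∀ i (h : i < v.length), v[i] ≠ top →
    ∃ j, ∃ hj : j < u.length, u[j] = v[i] ∧ f i = j ∧ f (i + 1) = j + 1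

theorem NHom_factor {α : Type*} (top : α) {u : List α} (a w b : List α)
    (hu : u = a ++ w ++ b) :
    NHom top u w (fun i => a.length + i) a.length (a.length + w.length) := by
  subst hu
  refine ⟨fun i hi => by simp [List.length_append]; omega, by simp, rfl, ?_⟩
  intro i h _
  refine ⟨a.length + i, by simp [List.length_append]; omega, ?_, rfl, rfl⟩
  rw [List.getElem_append_left (bs := b) (by simp [List.length_append]; omega)]
  rw [List.getElem_append_right (by omega)]
  congr 1
  omega

theorem NHom_top {α : Type*} (top : α) (u : List α) (p q : ℕ)
    (hp : p ≤ u.length) (hq : q ≤ u.length) :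
    NHom top u [top] (fun i => if i = 0 then p else q) p q := by
  refine ⟨fun i hi => ?_, rfl, rfl, ?_⟩
  · show (if i = 0 then p else q) ≤ u.length
    split <;> assumption
  · intro i h hne
    simp only [List.length_singleton] at h
    have : i = 0 := by omega
    subst this
    simp at hne

theorem NHom_append {α : Type*} (top : α) {u v₁ v₂ : List α} {f₁ f₂ : ℕ → ℕ} {p q r : ℕ}
    (h₁ : NHom top u v₁ f₁ p q) (h₂ : NHom top u v₂ f₂ q r) :
    NHom top u (v₁ ++ v₂)
      (fun i => if i < v₁.length then f₁ i else f₂ (i - v₁.length)) p r := by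
  obtain ⟨b₁, h10, h1l, he₁⟩ := h₁
  obtain ⟨b₂, h20, h2l, he₂⟩ := h₂
  refine ⟨?_, ?_, ?_, ?_⟩
  · intro i hi
    simp only [List.length_append] at hi
    show (if i < v₁.length then f₁ i else f₂ (i - v₁.length)) ≤ u.length
    split
    · exact b₁ i (by omega)
    · exact b₂ _ (by omega)
  · show (if 0 < v₁.length then f₁ 0 else f₂ (0 - v₁.length)) = p
    split
    · exact h10
    · have hz : v₁.length = 0 := by omega
      rw [Nat.zero_sub, h20, ← h1l, hz, h10]
  · show (if (v₁ ++ v₂).length < v₁.length then _ else f₂ ((v₁ ++ v₂).length - v₁.length)) = r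
    rw [if_neg (by simp [List.length_append])]
    simp only [List.length_append]
    rw [Nat.add_sub_cancel_left, h2l]
  · intro i h hne
    simp only [List.length_append] at h
    by_cases hc : i < v₁.length
    · have hgets : (v₁ ++ v₂)[i]'(by simpa [List.length_append] using h) = v₁[i] :=
        List.getElem_append_left hc
      rw [hgets] at hne ⊢
      obtain ⟨j, hj, hju, hfi, hfi1⟩ := he₁ i hc hne
      refine ⟨j, hj, hju, ?_, ?_⟩
      · show (if i < v₁.length then f₁ i else f₂ (i - v₁.length)) = j
        rw [if_pos hc]; exact hfi
      · show (if i + 1 < v₁.length then f₁ (i + 1) else f₂ (i + 1 - v₁.length)) = j + 1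
        by_cases hc1 : i + 1 < v₁.length
        · rw [if_pos hc1]; exact hfi1
        · have h1 : i + 1 = v₁.length := by omega
          rw [if_neg hc1, h1, Nat.sub_self, h20, ← h1l, ← h1, hfi1]
    · have hgets : (v₁ ++ v₂)[i]'(by simpa [List.length_append] using h)
          = v₂[i - v₁.length]'(by omega) :=
        List.getElem_append_right (by omega)
      rw [hgets] at hne ⊢
      obtain ⟨j, hj, hju, hfi, hfi1⟩ := he₂ (i - v₁.length) (by omega) hne
      refine ⟨j, hj, hju, ?_, ?_⟩
      · show (if i < v₁.length then f₁ i else f₂ (i - v₁.length)) = j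
        rw [if_neg hc]; exact hfi
      · show (if i + 1 < v₁.length then f₁ (i + 1) else f₂ (i + 1 - v₁.length)) = j + 1
        rw [if_neg (by omega)]
        have h1 : i + 1 - v₁.length = i - v₁.length + 1 := by omega
        rw [h1, hfi1]

theorem NHom_graphLE {α : Type*} (top : α) {u v : List α} {f : ℕ → ℕ}
    (h : NHom top u v f 0 u.length) : GraphLE top u v := by
  obtain ⟨b, h0, hl, he⟩ := h
  refine ⟨fun i => ⟨f i, Nat.lt_succ_of_le (b i (Nat.lt_succ_iff.mp i.isLt))⟩, ?_, ?_, ?_⟩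
  · exact Fin.ext h0
  · exact Fin.ext hl
  · intro i hne
    simp only [List.get_eq_getElem] at hne ⊢
    obtain ⟨j, hj, hju, hfi, hfi1⟩ := he i i.isLt hne
    exact ⟨⟨j, hj⟩, hju, Fin.ext hfi, Fin.ext hfi1⟩

/-- If `u →_F v` then there is a graph homomorphism from `g(v)` to `g(u)`. -/
theorem stepF_graphLE {α : Type*} (top : α) (u v : List α)
    (h : stepF top u v) : GraphLE top u v := by
  rcases h with ⟨l, w, r, hu, hv⟩ | ⟨l, w, r, hu, hv⟩
  · have h1 := NHom_factor top (u := u) ([] : List α) l (w ++ r) (by simp [hu])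
    have h2 := NHom_top top u l.length (l.length + w.length)
      (by simp only [hu, List.length_append]; omega)
      (by simp only [hu, List.length_append]; omega)
    have h3 := NHom_factor top (u := u) (l ++ w) r ([] : List α) (by simp [hu])
    simp only [List.length_nil, Nat.zero_add] at h1
    simp only [List.length_append] at h3
    have hq : l.length + w.length + r.length = u.length := by subst hu; simp; omega
    rw [hq] at h3
    have hB := NHom_append top (NHom_append top h1 h2) h3
    have hveq : (l ++ [top]) ++ r = v := by simp [hv]
    rw [← hveq]
    exact NHom_graphLE top hB
  · have h1 := NHom_factor top (u := u) ([] : List α) l (w ++ r) (by simp [hu])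
    have h2 := NHom_factor top (u := u) l w r (by simp [hu])
    have h3 := NHom_top top u (l.length + w.length) l.length
      (by simp only [hu, List.length_append]; omega)
      (by simp only [hu, List.length_append]; omega)
    have h5 := NHom_factor top (u := u) (l ++ w) r ([] : List α) (by simp [hu])
    simp only [List.length_nil, Nat.zero_add] at h1
    simp only [List.length_append] at h5
    have hq : l.length + w.length + r.length = u.length := by subst hu; simp; omega
    rw [hq] at h5
    have hB := NHom_append top (NHom_append top (NHom_append top
      (NHom_append top h1 h2) h3) h2) h5
    have hveq : ((((l ++ w) ++ [top]) ++ w) ++ r) = v := by simp [hv]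
    rw [← hveq]
    exact NHom_graphLE top hB
end

section
/- For words u, v over Σ ∪ {⊤}: there is a graph homomorphism g(u) ◁ g(v) (a label-, input-, and output-preserving map from g(v) to g(u)) if and only if there exists n ∈ ℕ with (u⊤)ⁿu →_T* v. -/
/-!
A homomorphism `g(v) → g(u)` sends each `Σ`-edge of `v` to the equally labelled edge of `u` that
follows the image of the previous one, while a `⊤`-gap of `v` may jump to any vertex of `u`.
Reading `v` from left to right, each jump leaves the current copy of `u` and enters a fresh one,
so `v` arises from `(u⊤)ⁿu`, with `n` the number of gaps, by collapsing the skipped stretch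
around each jump into a single `⊤`. Conversely, the copies of `u` in `(u⊤)ⁿu` fold onto `u`,
a rewrite `lwr →_T l⊤r` is undone by the homomorphism sending the new gap across `w`, and
homomorphisms compose.
-/

section

variable {α : Type*}

def PreservesEdges (top : α) (u v : List α) (f : ℕ → ℕ) : Prop :=
  ∀ i (hi : i < v.length), v[i] ≠ top →
    ∃ hj : f i < u.length, u[f i] = v[i] ∧ f (i + 1) = f i + 1

theorem graphLE_iff_exists_preservesEdges (top : α) (u v : List α) :
    GraphLE top u v ↔
      ∃ f : ℕ → ℕ, f 0 = 0 ∧ f v.length = u.length ∧ PreservesEdges top u v f := by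
  constructor
  · rintro ⟨F, hF0, hFlast, hF⟩
    refine ⟨fun n => if h : n < v.length + 1 then F ⟨n, h⟩ else 0, ?_, ?_, ?_⟩
    · simpa using congrArg Fin.val hF0
    · simp only [lt_add_one, dif_pos]
      exact congrArg Fin.val hFlast
    · intro i hi hv
      obtain ⟨j, hj, hcast, hsucc⟩ := hF ⟨i, hi⟩ hv
      have hi' : i < v.length + 1 := by omega
      have hi'' : i + 1 < v.length + 1 := by omega
      have hcast' : F ⟨i, hi'⟩ = j.castSucc := hcast
      have hsucc' : F ⟨i + 1, hi''⟩ = j.succ := hsucc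
      simp only [dif_pos hi', dif_pos hi'', hcast', hsucc']
      exact ⟨j.isLt, hj, rfl⟩
  · rintro ⟨f, hf0, hflast, hf⟩
    -- clamping is harmless: every edge constraint already forces `f i + 1 ≤ u.length`
    refine ⟨fun p => ⟨min (f p) u.length, by omega⟩, ?_, ?_, ?_⟩
    · ext; simp [hf0]
    · ext; simp [hflast]
    · intro i hv
      obtain ⟨hj, hu, hsucc⟩ := hf i i.isLt hv
      exact ⟨⟨f i, hj⟩, hu, by ext; simp; omega, by ext; simp [hsucc]; omega⟩

theorem preservesEdges_id (top : α) (u : List α) : PreservesEdges top u u id :=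
  fun _ hi _ => ⟨hi, rfl, rfl⟩

theorem PreservesEdges.comp {top : α} {u v w : List α} {f g : ℕ → ℕ}
    (hf : PreservesEdges top u v f) (hg : PreservesEdges top v w g) :
    PreservesEdges top u w (f ∘ g) := by
  intro i hi hw
  obtain ⟨hgi, hv, hg1⟩ := hg i hi hw
  obtain ⟨hfi, hu, hf1⟩ := hf (g i) hgi (hv ▸ hw)
  exact ⟨hfi, hu.trans hv, by simp only [Function.comp_apply, hg1, hf1]⟩

theorem graphLE_refl (top : α) (u : List α) : GraphLE top u u :=
  (graphLE_iff_exists_preservesEdges top u u).2 ⟨id, rfl, rfl, preservesEdges_id top u⟩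

theorem GraphLE.trans {top : α} {u v w : List α} (huv : GraphLE top u v)
    (hvw : GraphLE top v w) : GraphLE top u w := by
  rw [graphLE_iff_exists_preservesEdges] at *
  obtain ⟨f, hf0, hflast, hf⟩ := huv
  obtain ⟨g, hg0, hglast, hg⟩ := hvw
  exact ⟨f ∘ g, by simp [hg0, hf0], by simp [hglast, hflast], hf.comp hg⟩

theorem GraphLE.append_top_append {top : α} {u x y : List α} (hx : GraphLE top u x)
    (hy : GraphLE top u y) : GraphLE top u (x ++ top :: y) := by
  rw [graphLE_iff_exists_preservesEdges] at *
  obtain ⟨f, hf0, -, hf⟩ := hx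
  obtain ⟨g, -, hglast, hg⟩ := hy
  refine ⟨fun i => if i ≤ x.length then f i else g (i - (x.length + 1)), by simp [hf0],
    by simp [show x.length + (y.length + 1) - (x.length + 1) = y.length by omega, hglast], ?_⟩
  intro i hi hv
  replace hi : i < x.length + y.length + 1 := by simpa [← Nat.add_assoc] using hi
  rcases lt_trichotomy i x.length with hlt | rfl | hgt
  · rw [List.getElem_append_left hlt] at hv ⊢
    obtain ⟨hfi, hu, hf1⟩ := hf i hlt hv
    simp only [if_pos hlt.le, if_pos (show i + 1 ≤ x.length by omega)]
    exact ⟨hfi, hu, hf1⟩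
  · simp at hv
  · obtain ⟨k, rfl⟩ := Nat.exists_eq_add_of_lt hgt
    have hk : k < y.length := by omega
    have hget : (x ++ top :: y)[x.length + k + 1] = y[k] := by
      rw [List.getElem_append_right (by omega)]
      simp only [show x.length + k + 1 - x.length = k + 1 by omega, List.getElem_cons_succ]
    rw [hget] at hv ⊢
    obtain ⟨hgk, hu, hg1⟩ := hg k hk hv
    simp only [if_neg (show ¬x.length + k + 1 ≤ x.length by omega),
      if_neg (show ¬x.length + k + 1 + 1 ≤ x.length by omega),
      show x.length + k + 1 - (x.length + 1) = k by omega,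
      show x.length + k + 1 + 1 - (x.length + 1) = k + 1 by omega]
    exact ⟨hgk, hu, hg1⟩

theorem graphLE_tpow (top : α) (u : List α) (n : ℕ) : GraphLE top u (tpow top u n) := by
  induction n with
  | zero => exact graphLE_refl top u
  | succ n ih => exact (graphLE_refl top u).append_top_append ih

theorem graphLE_of_stepT {top : α} {v v' : List α} (h : stepT top v v') : GraphLE top v v' := by
  obtain ⟨l, w, r, rfl, rfl⟩ := h
  rw [graphLE_iff_exists_preservesEdges]
  refine ⟨fun i => if i ≤ l.length then i else i - 1 + w.length, by simp, ?_, ?_⟩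
  · simp only [List.length_append, List.length_cons]
    rw [if_neg (by omega)]
    omega
  intro i hi hv
  beta_reduce
  replace hi : i < l.length + r.length + 1 := by simpa [← Nat.add_assoc] using hi
  rcases lt_trichotomy i l.length with hlt | rfl | hgt
  · rw [List.getElem_append_left hlt] at hv ⊢
    rw [if_pos hlt.le, if_pos (show i + 1 ≤ l.length by omega)]
    exact ⟨by simp; omega, by simp only [List.append_assoc, List.getElem_append_left hlt], rfl⟩
  · simp at hv
  · obtain ⟨k, rfl⟩ := Nat.exists_eq_add_of_lt hgt
    have hget : (l ++ top :: r)[l.length + k + 1] = r[k] := by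
      rw [List.getElem_append_right (by omega)]
      simp only [show l.length + k + 1 - l.length = k + 1 by omega, List.getElem_cons_succ]
    have hget' : (l ++ w ++ r)[l.length + k + w.length]'(by simp; omega) = r[k] := by
      rw [List.getElem_append_right (by simp)]
      simp only [List.length_append,
        show l.length + k + w.length - (l.length + w.length) = k by omega]
    rw [hget] at hv ⊢
    rw [if_neg (by omega), if_neg (by omega)]
    simp only [Nat.add_sub_cancel]
    exact ⟨by simp; omega, hget', by omega⟩

theorem stepT_cons {top : α} (a : α) {x y : List α} (h : stepT top x y) :
    stepT top (a :: x) (a :: y) := by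
  obtain ⟨l, w, r, rfl, rfl⟩ := h
  exact ⟨a :: l, w, r, rfl, rfl⟩

theorem reflTransGen_stepT_cons {top : α} (a : α) {x y : List α}
    (h : Relation.ReflTransGen (stepT top) x y) :
    Relation.ReflTransGen (stepT top) (a :: x) (a :: y) :=
  h.lift (a :: ·) fun _ _ => stepT_cons a

theorem stepT_append_top (top : α) (w r : List α) : stepT top (w ++ r) (top :: r) :=
  ⟨[], w, r, rfl, rfl⟩

theorem tpow_eq_append_flatten (top : α) (u : List α) (n : ℕ) :
    tpow top u n = u ++ (List.replicate n (top :: u)).flatten := by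
  induction n with
  | zero => simp [tpow]
  | succ n ih => simp [tpow, ih, List.replicate_succ]

theorem exists_rewrites_of_preservesEdges {top : α} {u : List α} (v : List α) {f : ℕ → ℕ}
    (hf : PreservesEdges top u v f) (hlast : f v.length = u.length) :
    ∃ n, Relation.ReflTransGen (stepT top)
      (u.drop (f 0) ++ (List.replicate n (top :: u)).flatten) v := by
  induction v generalizing f with
  | nil => exact ⟨0, by simpa [show f 0 = u.length from hlast] using .refl⟩
  | cons a v ih =>
    obtain ⟨n, hn⟩ := ih (f := fun i => f (i + 1))
      (fun i hi hv => hf (i + 1) (by simpa using hi) hv) hlast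
    by_cases ha : a = top
    · subst ha
      refine ⟨n + 1, .head ?_ (reflTransGen_stepT_cons a hn)⟩
      -- the jump along `⊤` skips the rest of this copy of `u` and the start of the next one
      have hsplit : u.drop (f 0) ++ (List.replicate (n + 1) (a :: u)).flatten =
          (u.drop (f 0) ++ a :: u.take (f 1)) ++
            (u.drop (f 1) ++ (List.replicate n (a :: u)).flatten) := by
        simp only [List.replicate_succ, List.flatten_cons, List.cons_append, List.append_assoc]
        rw [← List.append_assoc (u.take _), List.take_append_drop]
      rw [hsplit]
      exact stepT_append_top a _ _
    · obtain ⟨h0, hu, h1⟩ := hf 0 (by simp) ha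
      refine ⟨n, ?_⟩
      have hdrop : u.drop (f 0) = a :: u.drop (f 1) := by
        rw [show f 1 = f 0 + 1 from h1, List.drop_eq_getElem_cons h0, hu, List.getElem_cons_zero]
      simpa [hdrop] using reflTransGen_stepT_cons a hn

end

/-- `g(u) ◁ g(v)` iff `(u⊤)ⁿu →_T* v` for some `n`. -/
theorem graphLE_iff_tpow_rewrites {α : Type*} (top : α) (u v : List α) :
    GraphLE top u v ↔
      ∃ n : ℕ, Relation.ReflTransGen (stepT top) (tpow top u n) v := by
  constructor
  · intro h
    obtain ⟨f, hf0, hflast, hf⟩ := (graphLE_iff_exists_preservesEdges top u v).1 h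
    obtain ⟨n, hn⟩ := exists_rewrites_of_preservesEdges v hf hflast
    exact ⟨n, by simpa [tpow_eq_append_flatten, hf0] using hn⟩
  · rintro ⟨n, hn⟩
    induction hn with
    | refl => exact graphLE_tpow top u n
    | tail _ hstep ih => exact ih.trans (graphLE_of_stepT hstep)
end
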